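/- Let (X,·,d) be a group which is complete and metric invariant, with identity element e. Let f and g be two 1-Lipschitz real-valued functions on X. Then f ⊕ g = d(e,·) if and only if there exist ỹ ∈ X and c ∈ ℝ such that f = d(ỹ,·) + c and g = d(ỹ⁻¹,·) − c. -/

import Mathlib

/-!
Put `h y = f y + g y⁻¹`. If `f ⊕ g = d(1, ·)`, then `d(1, y z) ≤ f y + g z` for all `y, z`, and
`h` has infimum `d(1, 1) = 0`. By invariance, `d(u, v) = d(1, v u⁻¹) ≤ f v + g u⁻¹`, so
`2 d(u, v) ≤ h u + h v`: minimizing sequences of `h` are Cauchy, and by completeness `h` vanishes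
at some `ỹ`. Then `d(ỹ, x) + f ỹ = d(1, x ỹ⁻¹) - g ỹ⁻¹ ≤ f x ≤ f ỹ + d(ỹ, x)`, and likewise for `g`.
Conversely, `d(1, y z) ≤ d(ỹ, y) + d(ỹ⁻¹, z)` is the triangle inequality through `y ỹ⁻¹`, with
equality at `y = ỹ`.
-/

open Filter Topology

section InfConvolution

variable {X : Type*} [Mul X]

noncomputable def infConv (f g : X → ℝ) (x : X) : EReal :=
  sInf {r : EReal | ∃ y z : X, y * z = x ∧ r = ((f y + g z : ℝ) : EReal)}

theorem infConv_le (f g : X → ℝ) (y z : X) : infConv f g (y * z) ≤ ((f y + g z : ℝ) : EReal) :=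
  sInf_le ⟨y, z, rfl, rfl⟩

theorem le_infConv_iff {f g : X → ℝ} {x : X} {r : EReal} :
    r ≤ infConv f g x ↔ ∀ y z, y * z = x → r ≤ ((f y + g z : ℝ) : EReal) :=
  le_sInf_iff.trans
    ⟨fun h y z hyz => h _ ⟨y, z, hyz, rfl⟩, fun h _ ⟨y, z, hyz, hr⟩ => hr ▸ h y z hyz⟩

theorem infConv_lt_iff {f g : X → ℝ} {x : X} {r : EReal} :
    infConv f g x < r ↔ ∃ y z, y * z = x ∧ ((f y + g z : ℝ) : EReal) < r := by
  simp [infConv, sInf_lt_iff]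

end InfConvolution

theorem exists_eq_zero_of_two_mul_dist_le_add {M : Type*} [PseudoMetricSpace M] [CompleteSpace M]
    {h : M → ℝ} (hc : Continuous h) (hdist : ∀ u v, 2 * dist u v ≤ h u + h v)
    (hsmall : ∀ ε > 0, ∃ u, h u < ε) : ∃ t, h t = 0 := by
  have hnonneg : ∀ u, 0 ≤ h u := fun u => by linarith [hdist u u, dist_self u]
  choose u hu using fun n : ℕ => hsmall (1 / ((n : ℝ) + 1)) Nat.one_div_pos_of_nat
  have hcauchy : CauchySeq u := by
    refine cauchySeq_of_le_tendsto_0 (fun N : ℕ => 1 / ((N : ℝ) + 1)) (fun n m N hn hm => ?_)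
      tendsto_one_div_add_atTop_nhds_zero_nat
    have hnN : 1 / ((n : ℝ) + 1) ≤ 1 / ((N : ℝ) + 1) := Nat.one_div_le_one_div hn
    have hmN : 1 / ((m : ℝ) + 1) ≤ 1 / ((N : ℝ) + 1) := Nat.one_div_le_one_div hm
    linarith [hdist (u n) (u m), hu n, hu m]
  obtain ⟨t, ht⟩ := cauchySeq_tendsto_of_complete hcauchy
  have hlim : Tendsto (h ∘ u) atTop (𝓝 0) :=
    squeeze_zero (fun n => hnonneg _) (fun n => (hu n).le) tendsto_one_div_add_atTop_nhds_zero_nat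
  exact ⟨t, tendsto_nhds_unique ((hc.tendsto t).comp ht) hlim⟩

section IsometricGroup

variable {X : Type*} [Group X] [PseudoMetricSpace X]

theorem dist_one_mul_inv [IsIsometricSMul Xᵐᵒᵖ X] (a b : X) : dist 1 (b * a⁻¹) = dist a b := by
  rw [← mul_inv_cancel a, dist_mul_right]

theorem dist_one_mul [IsIsometricSMul X X] (a b : X) : dist 1 (a * b) = dist a⁻¹ b := by
  rw [← dist_mul_left a a⁻¹ b, mul_inv_cancel]

theorem dist_one_mul_le [IsIsometricSMul X X] [IsIsometricSMul Xᵐᵒᵖ X] (t y z : X) :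
    dist 1 (y * z) ≤ dist t y + dist t⁻¹ z :=
  calc dist 1 (y * z) ≤ dist 1 (y * t⁻¹) + dist (y * t⁻¹) (y * z) := dist_triangle _ _ _
    _ = dist t y + dist t⁻¹ z := by rw [dist_one_mul_inv, dist_mul_left]

theorem infConv_dist_add_const_dist_inv_sub_const [IsIsometricSMul X X] [IsIsometricSMul Xᵐᵒᵖ X]
    (t : X) (c : ℝ) (x : X) :
    infConv (fun y => dist t y + c) (fun z => dist t⁻¹ z - c) x = ((dist 1 x : ℝ) : EReal) := by
  refine le_antisymm ?_ (le_infConv_iff.2 fun y z hyz => ?_)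
  · have hval : dist t t + c + (dist t⁻¹ (t⁻¹ * x) - c) = dist 1 x := by
      rw [dist_self, ← dist_one_mul, mul_inv_cancel_left]
      ring
    simpa only [mul_inv_cancel_left, hval] using
      infConv_le (fun y => dist t y + c) (fun z => dist t⁻¹ z - c) t (t⁻¹ * x)
  · subst hyz
    exact_mod_cast (by linarith [dist_one_mul_le t y z])

theorem exists_eq_dist_of_dist_one_mul_le [CompleteSpace X] [IsIsometricSMul X X]
    [IsIsometricSMul Xᵐᵒᵖ X] {f g : X → ℝ} (hf : LipschitzWith 1 f) (hg : LipschitzWith 1 g)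
    (hle : ∀ y z, dist 1 (y * z) ≤ f y + g z) (hsmall : ∀ ε > 0, ∃ y, f y + g y⁻¹ < ε) :
    ∃ t : X, (∀ x, f x = dist t x + f t) ∧ ∀ x, g x = dist t⁻¹ x - f t := by
  have hdist : ∀ u v : X, 2 * dist u v ≤ (f u + g u⁻¹) + (f v + g v⁻¹) := fun u v => by
    have huv := hle v u⁻¹
    have hvu := hle u v⁻¹
    rw [dist_one_mul_inv] at huv hvu
    linarith [dist_comm u v]
  obtain ⟨t, ht⟩ : ∃ t, f t + g t⁻¹ = 0 := exists_eq_zero_of_two_mul_dist_le_add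
    (h := fun y => f y + g y⁻¹) (hf.continuous.add (hg.continuous.comp isometry_inv.continuous))
    hdist hsmall
  refine ⟨t, fun x => le_antisymm ?_ ?_, fun x => le_antisymm ?_ ?_⟩
  · have hlip : f x ≤ f t + dist x t := by simpa using hf.le_add_mul x t
    linarith [dist_comm x t]
  · linarith [hle x t⁻¹, dist_one_mul_inv t x]
  · have hlip : g x ≤ g t⁻¹ + dist x t⁻¹ := by simpa using hg.le_add_mul x t⁻¹
    linarith [dist_comm x t⁻¹]
  · linarith [hle t x, dist_one_mul t x]

end IsometricGroup

/-- on a complete metric invariant group with identity `1`, for two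
1-Lipschitz functions `f, g`, one has `f ⊕ g = d(1,·)` (inf-convolution computed in
`EReal`) iff there are `ỹ ∈ X` and `c ∈ ℝ` with `f = d(ỹ,·) + c` and
`g = d(ỹ⁻¹,·) − c`. -/
theorem infConv_eq_kuratowski_one_iff {X : Type*} [Group X] [MetricSpace X] [CompleteSpace X]
    (hleft : ∀ x y z : X, dist (x * y) (x * z) = dist y z)
    (hright : ∀ x y z : X, dist (y * x) (z * x) = dist y z)
    (f g : X → ℝ)
    (hf : ∀ x y : X, |f x - f y| ≤ dist x y)
    (hg : ∀ x y : X, |g x - g y| ≤ dist x y) :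
    (∀ x : X, sInf {r : EReal | ∃ y z : X, y * z = x ∧ r = ((f y + g z : ℝ) : EReal)}
        = ((dist (1 : X) x : ℝ) : EReal)) ↔
      ∃ (ty : X) (c : ℝ), (∀ x : X, f x = dist ty x + c) ∧
        (∀ x : X, g x = dist ty⁻¹ x - c) := by
  have : IsIsometricSMul X X := ⟨fun c => Isometry.of_dist_eq (hleft c)⟩
  have : IsIsometricSMul Xᵐᵒᵖ X := ⟨fun c => Isometry.of_dist_eq (hright c.unop)⟩
  change (∀ x, infConv f g x = _) ↔ _
  constructor
  · intro h
    have hle : ∀ y z : X, dist 1 (y * z) ≤ f y + g z := fun y z =>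
      EReal.coe_le_coe_iff.1 ((h (y * z)).symm.trans_le (infConv_le f g y z))
    have hsmall : ∀ ε > 0, ∃ y : X, f y + g y⁻¹ < ε := fun ε hε => by
      obtain ⟨y, z, hyz, hlt⟩ :=
        infConv_lt_iff.1 ((h 1).trans_lt (by simpa using hε : ((dist (1 : X) 1 : ℝ) : EReal) < ε))
      rw [eq_inv_of_mul_eq_one_right hyz] at hlt
      exact ⟨y, EReal.coe_lt_coe_iff.1 hlt⟩
    obtain ⟨t, hft, hgt⟩ := exists_eq_dist_of_dist_one_mul_le
      (.mk_one fun x y => (Real.dist_eq _ _).trans_le (hf x y))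
      (.mk_one fun x y => (Real.dist_eq _ _).trans_le (hg x y)) hle hsmall
    exact ⟨t, f t, hft, hgt⟩
  · rintro ⟨t, c, hft, hgt⟩ x
    rw [funext hft, funext hgt]
    exact infConv_dist_add_const_dist_inv_sub_const t c x
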